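/- arXiv:2011.14191 — 2 statements merged into one kernel-verified Lean document; each statement's English description precedes it below -/
import Mathlib

section
/- Let G be a countable group and K a field. If the group algebra K[G] is one-sided Noetherian, then G is of K-linear Markov type: for every finite-dimensional K-vector space A, every linear subshift of A^G is of finite type. -/
def shiftSigma (G : Type*) [Group G] {A : Type*} (D : Set G) (P : Set (D → A)) :
    Set (G → A) :=
  {x | ∀ g : G, (fun d : D => x (g * (d : G))) ∈ P}

def prodiscreteTop (G A : Type*) : TopologicalSpace (G → A) :=
  @Pi.topologicalSpace G (fun _ => A) (fun _ => ⊥)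

def IsLinearSubshift (K : Type*) {G A : Type*} [Field K] [Group G] [AddCommGroup A]
    [Module K A] (S : Set (G → A)) : Prop :=
  (∃ M : Submodule K (G → A), (M : Set (G → A)) = S) ∧
    (∀ g : G, ∀ x ∈ S, (fun h => x (g⁻¹ * h)) ∈ S) ∧
    @IsClosed _ (prodiscreteTop G A) S

def IsSFT {G A : Type*} [Group G] (S : Set (G → A)) : Prop :=
  ∃ (D : Finset G) (P : Set (↥(D : Set G) → A)), S = shiftSigma G (D : Set G) P

def IsLCA (K : Type*) {G A : Type*} [Field K] [Group G] [AddCommGroup A] [Module K A]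
    (τ : (G → A) → (G → A)) : Prop :=
  IsLinearMap K τ ∧ ∃ (M : Finset G) (μ : (↥(M : Set G) → A) → A), IsLinearMap K μ ∧
    ∀ (x : G → A) (g : G), τ x g = μ (fun m : (M : Set G) => x (g * (m : G)))

/-!
After fixing a basis of `A`, the module `K[G]ⁿ` pairs with configurations `x : G → A` by
`⟨x, μ⟩ = ∑ᵢ ∑_g μᵢ(g) xᵢ(g)`, and left multiplication by `g` is adjoint to translating `x` by `g`.
So the `μ` annihilating all translates of a linear subshift `S` form a left `K[G]`-submodule `N`,
finitely generated because `K[G]` is Noetherian. Since `S` is a closed subspace, a configuration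
outside `S` is separated from it by a linear functional reading finitely many coordinates, i.e. by
an element of `N`; hence `S` is the set of configurations whose translates are all annihilated by
the generators of `N`, a condition that only reads the window where the generators are supported.
-/

open Topology

theorem exists_finset_forall_exists_ne_of_isClosed {G A : Type*} {S : Set (G → A)}
    (hS : IsClosed[prodiscreteTop G A] S) {x : G → A} (hx : x ∉ S) :
    ∃ F : Finset G, ∀ y ∈ S, ∃ a ∈ F, y a ≠ x a := by
  let : TopologicalSpace A := ⊥
  obtain ⟨F, u, hxu, hu⟩ := isOpen_pi_iff.1 hS.isOpen_compl x hx
  refine ⟨F, fun y hy => ?_⟩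
  by_contra! h
  exact hu (fun a ha => h a ha ▸ (hxu a ha).2) hy

section Pairing

variable {G K A : Type*} [Field K] [AddCommGroup A] [Module K A]
  {n : ℕ} (b : Module.Basis (Fin n) K A)

noncomputable def pairing (x : G → A) : (Fin n → MonoidAlgebra K G) →ₗ[K] K :=
  ∑ i, Finsupp.linearCombination K (fun g => b.coord i (x g)) ∘ₗ
    (MonoidAlgebra.coeffLinearEquiv K).toLinearMap ∘ₗ LinearMap.proj i

lemma pairing_apply (x : G → A) (μ : Fin n → MonoidAlgebra K G) :
    pairing b x μ = ∑ i, Finsupp.linearCombination K (fun g => b.coord i (x g)) (μ i).coeff := by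
  simp only [pairing, LinearMap.sum_apply, LinearMap.comp_apply, LinearMap.proj_apply]
  rfl

lemma pairing_single_smul [Group G] (x : G → A) (g : G) (c : K)
    (μ : Fin n → MonoidAlgebra K G) :
    pairing b x (MonoidAlgebra.single g c • μ) = c * pairing b (fun h => x (g * h)) μ := by
  have hcoeff (f : MonoidAlgebra K G) :
      (MonoidAlgebra.single g c * f).coeff = c • Finsupp.mapDomain (Equiv.mulLeft g) f.coeff := by
    ext k
    rw [MonoidAlgebra.coeff_single_mul_apply, Finsupp.smul_apply, Finsupp.mapDomain_equiv_apply]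
    simp
  simp only [pairing_apply, Finset.mul_sum, Pi.smul_apply, smul_eq_mul, hcoeff, map_smul,
    Finsupp.linearCombination_mapDomain]
  rfl

lemma pairing_congr {D : Set G} {μ : Fin n → MonoidAlgebra K G}
    (hμ : ∀ i, ↑(μ i).coeff.support ⊆ D) {x y : G → A} (hxy : Set.EqOn x y D) :
    pairing b x μ = pairing b y μ := by
  simp only [pairing_apply, Finsupp.linearCombination_apply]
  refine Finset.sum_congr rfl fun i _ => Finsupp.sum_congr fun g hg => ?_
  rw [hxy (hμ i hg)]

lemma exists_pairing_eq_restrict (F : Finset G) (φ : Module.Dual K (F → A)) :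
    ∃ μ : Fin n → MonoidAlgebra K G, ∀ x : G → A, pairing b x μ = φ (fun f : F => x f) := by
  classical
  refine ⟨fun i => ∑ f : F, MonoidAlgebra.single (f : G) (φ (Pi.single f (b i))), fun x => ?_⟩
  conv_rhs => rw [← (Pi.basis fun _ : F => b).sum_dual_apply_smul_coord φ]
  simp only [LinearMap.sum_apply, LinearMap.smul_apply, Module.Basis.coord_apply, Pi.basis_repr,
    Pi.basis_apply, Fintype.sum_sigma, smul_eq_mul]
  rw [Finset.sum_comm, pairing_apply]
  simp [MonoidAlgebra.coeff_sum, MonoidAlgebra.coeff_single, mul_comm]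

theorem exists_pairing_separating {M : Submodule K (G → A)}
    (hM : IsClosed[prodiscreteTop G A] (M : Set (G → A))) {x : G → A} (hx : x ∉ M) :
    ∃ μ : Fin n → MonoidAlgebra K G, (∀ y ∈ M, pairing b y μ = 0) ∧ pairing b x μ ≠ 0 := by
  obtain ⟨F, hF⟩ := exists_finset_forall_exists_ne_of_isClosed hM hx
  let ρ := LinearMap.funLeft K A (Subtype.val : F → G)
  have hρx : ρ x ∉ M.map ρ := by
    rintro ⟨y, hy, hyx⟩
    obtain ⟨a, ha, hne⟩ := hF y hy
    exact hne (congrFun hyx ⟨a, ha⟩)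
  obtain ⟨φ, hφx, hφM⟩ := Submodule.exists_dual_map_eq_bot_of_notMem hρx inferInstance
  obtain ⟨μ, hμ⟩ := exists_pairing_eq_restrict b F φ
  refine ⟨μ, fun y hy => ?_, by rwa [hμ]⟩
  rw [hμ]
  have hφy : φ (ρ y) ∈ (M.map ρ).map φ := Submodule.mem_map_of_mem (Submodule.mem_map_of_mem hy)
  rwa [hφM, Submodule.mem_bot] at hφy

variable [Group G]

noncomputable def translationAnnihilator (S : Set (G → A)) :
    Submodule (MonoidAlgebra K G) (Fin n → MonoidAlgebra K G) where
  carrier := {μ | ∀ x ∈ S, ∀ g, pairing b (fun h => x (g * h)) μ = 0}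
  add_mem' hμ hν x hx g := by rw [map_add, hμ x hx g, hν x hx g, add_zero]
  zero_mem' x _ g := map_zero _
  smul_mem' r μ hμ x hx g := by
    induction r using MonoidAlgebra.induction_on generalizing g with
    | of g' =>
      rw [MonoidAlgebra.of_apply, pairing_single_smul, one_mul]
      simpa only [mul_assoc] using hμ x hx (g * g')
    | add r₁ r₂ ih₁ ih₂ => rw [add_smul, map_add, ih₁, ih₂, add_zero]
    | smul c r ih => rw [smul_assoc, map_smul, ih, smul_zero]

lemma mem_translationAnnihilator {S : Set (G → A)} {μ : Fin n → MonoidAlgebra K G} :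
    μ ∈ translationAnnihilator b S ↔ ∀ x ∈ S, ∀ g, pairing b (fun h => x (g * h)) μ = 0 :=
  Iff.rfl

theorem mem_of_translationAnnihilator_le {M : Submodule K (G → A)}
    (hM : IsClosed[prodiscreteTop G A] (M : Set (G → A)))
    (htrans : ∀ g, ∀ y ∈ M, (fun h => y (g * h)) ∈ M) {x : G → A}
    (hx : translationAnnihilator b (M : Set (G → A)) ≤ translationAnnihilator b {x}) : x ∈ M := by
  by_contra hxM
  obtain ⟨μ, hμM, hμx⟩ := exists_pairing_separating b hM hxM
  have hμ : μ ∈ translationAnnihilator b (M : Set (G → A)) := fun y hy g => hμM _ (htrans g y hy)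
  exact hμx (by simpa only [one_mul] using (mem_translationAnnihilator b).1 (hx hμ) x rfl 1)

end Pairing

theorem isSFT_of_isNoetherianRing {G K A : Type*} [Group G] [Field K] [AddCommGroup A]
    [Module K A] [FiniteDimensional K A] (hN : IsNoetherianRing (MonoidAlgebra K G))
    {S : Set (G → A)} (hS : IsLinearSubshift K S) : IsSFT S := by
  classical
  obtain ⟨⟨M, rfl⟩, hinv, hcl⟩ := hS
  have htrans : ∀ g, ∀ y ∈ M, (fun h => y (g * h)) ∈ M := fun g y hy => by
    simpa only [inv_inv, SetLike.mem_coe] using hinv g⁻¹ y hy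
  let b := Module.finBasis K A
  obtain ⟨s, hs⟩ := IsNoetherian.noetherian (translationAnnihilator b (M : Set (G → A)))
  let D : Finset G := s.biUnion fun μ => Finset.univ.biUnion fun i => (μ i).coeff.support
  have hD : ∀ μ ∈ s, ∀ i, ↑(μ i).coeff.support ⊆ (D : Set G) := fun μ hμ i => by
    intro g hg
    simp only [D, Finset.coe_biUnion, Set.mem_iUnion]
    exact ⟨μ, hμ, i, Finset.mem_univ i, hg⟩
  refine ⟨D, (fun y (d : (D : Set G)) => y d) '' {y | ∀ μ ∈ s, pairing b y μ = 0}, ?_⟩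
  ext x
  constructor
  · intro hx g
    refine ⟨fun h => x (g * h), fun μ hμ => ?_, rfl⟩
    exact (mem_translationAnnihilator b).1 (hs ▸ Submodule.subset_span hμ) x hx g
  · intro hx
    refine mem_of_translationAnnihilator_le b hcl htrans ?_
    rw [← hs, Submodule.span_le]
    rintro ν hν _ rfl g
    obtain ⟨y, hy, hyx⟩ := hx g
    rw [← hy ν hν]
    exact pairing_congr b (hD ν hν) fun d hd => (congrFun hyx ⟨d, hd⟩).symm

theorem stmt10_general {G : Type} (K : Type) [Group G] [Field K]
    (hN : IsNoetherianRing (MonoidAlgebra K G)) :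
    ∀ (A : Type) (_ : AddCommGroup A) (_ : Module K A), FiniteDimensional K A →
      ∀ S : Set (G → A), IsLinearSubshift K S → IsSFT S :=
  fun _ _ _ _ _ hS => isSFT_of_isNoetherianRing hN hS

theorem stmt10 {G : Type} (K : Type) [Group G] [Countable G] [Field K]
    (hN : IsNoetherianRing (MonoidAlgebra K G)) :
    ∀ (A : Type) (_ : AddCommGroup A) (_ : Module K A), FiniteDimensional K A →
      ∀ S : Set (G → A), IsLinearSubshift K S → IsSFT S :=
  stmt10_general K hN
end

section
/- Let G be a finitely generated infinite group, K a field, A a finite-dimensional K-vector space, Σ ⊆ A^G a topologically mixing linear subshift, and τ : Σ → Σ a linear cellular automaton. If τ is pointwise nilpotent (for every x ∈ Σ there is n_x with τⁿ(x) = 0 for all n ≥ n_x), then τ is nilpotent (τ^{n_0} = 0 for some n_0). -/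
def TopMixing {G A : Type*} [Group G] (S : Set (G → A)) : Prop :=
  ∀ U V : Set (G → A), @IsOpen _ (prodiscreteTop G A) U → @IsOpen _ (prodiscreteTop G A) V →
    (U ∩ S).Nonempty → (V ∩ S).Nonempty →
    ∃ F : Finset G, ∀ g : G, g ∉ F →
      ∃ z ∈ U ∩ S, (fun h => z (g * h)) ∈ V ∩ S


/-! The sets `{x ∈ Σ | τⁿ x = 0}` are closed and cover `Σ`, which is completely metrizable
because `G` is countable. By Baire one of them contains a cylinder `{x ∈ Σ | x = x₀ on Ω}`, and by
linearity `τⁿ` then kills every `z ∈ Σ` vanishing on `Ω`. Given `y ∈ Σ` and `c ∈ G`, mixing yields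
such a `z` whose translate by some `g` agrees with `y` on the memory window of `τⁿ` at `c`; as `τⁿ`
commutes with translations, `τⁿ y c = τⁿ z (g c) = 0`. -/

open scoped Pointwise Topology

lemma Group.FG.countable {G : Type*} [Group G] (hfg : Group.FG G) : Countable G := by
  obtain ⟨α, _, φ, hφ⟩ := Group.fg_iff_exists_freeGroup_hom_surjective_finite.mp hfg
  exact hφ.countable

section Prodiscrete

variable {G A : Type*}

lemma isOpen_prodiscrete_cylinder (F : Finset G) (x : G → A) :
    IsOpen[prodiscreteTop G A] {y | ∀ a ∈ F, y a = x a} := by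
  let _ : TopologicalSpace A := ⊥
  have : DiscreteTopology A := ⟨rfl⟩
  have hcyl : {y | ∀ a ∈ F, y a = x a} = (F : Set G).pi fun a => {x a} := by ext; simp
  rw [hcyl]
  exact isOpen_set_pi F.finite_toSet fun a _ => isOpen_discrete {x a}

lemma exists_cylinder_subset_of_subset_iUnion [Countable G] {S : Set (G → A)}
    (hS : IsClosed[prodiscreteTop G A] S) (hne : S.Nonempty) {C : ℕ → Set (G → A)}
    (hC : ∀ n, IsClosed[prodiscreteTop G A] (C n)) (hcover : S ⊆ ⋃ n, C n) :
    ∃ n, ∃ x₀ ∈ S, ∃ Ω : Finset G, ∀ x ∈ S, (∀ ω ∈ Ω, x ω = x₀ ω) → x ∈ C n := by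
  let _ : TopologicalSpace A := ⊥
  have : DiscreteTopology A := ⟨rfl⟩
  have : TopologicalSpace.IsCompletelyMetrizableSpace S := IsClosed.isCompletelyMetrizableSpace hS
  have : Nonempty S := hne.to_subtype
  have : BaireSpace S := BaireSpace.of_completelyPseudoMetrizable
  have hcl (n : ℕ) : IsClosed (((↑) : S → G → A) ⁻¹' C n) :=
    (hC n : IsClosed (C n)).preimage continuous_subtype_val
  obtain ⟨n, x₀, hx₀⟩ := nonempty_interior_of_iUnion_of_closed hcl
    (Set.eq_univ_of_forall fun x => by simpa using hcover x.2)
  obtain ⟨U, hU, hpre⟩ := isOpen_induced_iff.mp (isOpen_interior (s := ((↑) : S → G → A) ⁻¹' C n))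
  obtain ⟨Ω, u, hu, hsub⟩ := isOpen_pi_iff.mp hU x₀ (hpre ▸ hx₀ :)
  refine ⟨n, x₀, x₀.2, Ω, fun x hx hxΩ => ?_⟩
  have hxU : x ∈ U := hsub fun ω hω => hxΩ ω hω ▸ (hu ω hω).2
  exact interior_subset (s := ((↑) : S → G → A) ⁻¹' C n) (hpre ▸ hxU : ⟨x, hx⟩ ∈ _)

end Prodiscrete

section Memory

variable {G A B : Type*} [Group G]

def IsMemorySet (D : Finset G) (σ : (G → A) → (G → B)) : Prop :=
  ∀ x y g, (∀ d ∈ D, x (g * d) = y (g * d)) → σ x g = σ y g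

lemma isMemorySet_of_localRule {M : Finset G} {μ : (M → A) → B} {σ : (G → A) → (G → B)}
    (hσ : ∀ x g, σ x g = μ fun m : (M : Set G) => x (g * m)) : IsMemorySet M σ := by
  intro x y g hxy
  rw [hσ, hσ]
  exact congrArg μ (funext fun m => hxy m m.2)

lemma commute_shift_of_localRule {M : Finset G} {μ : (M → A) → A} {σ : (G → A) → (G → A)}
    (hσ : ∀ x g, σ x g = μ fun m : (M : Set G) => x (g * m)) (g : G) :
    Function.Commute σ fun x h => x (g * h) := by
  intro x
  funext h
  simp only [hσ, mul_assoc]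

lemma IsMemorySet.iterate [DecidableEq G] {M : Finset G} {σ : (G → A) → (G → A)}
    (hσ : IsMemorySet M σ) (n : ℕ) : IsMemorySet (M ^ n) σ^[n] := by
  induction n with
  | zero => intro x y g hxy; simpa using hxy 1 (Finset.mem_one.mpr rfl)
  | succ n ih =>
    intro x y g hxy
    rw [Function.iterate_succ_apply', Function.iterate_succ_apply']
    refine hσ _ _ g fun m hm => ih x y (g * m) fun d hd => ?_
    rw [mul_assoc]
    exact hxy _ (pow_succ' M n ▸ Finset.mul_mem_mul hm hd)

lemma IsMemorySet.continuous {D : Finset G} {σ : (G → A) → (G → B)} (hσ : IsMemorySet D σ) :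
    Continuous[prodiscreteTop G A, prodiscreteTop G B] σ := by
  let _ : TopologicalSpace A := ⊥
  let _ : TopologicalSpace B := ⊥
  classical
  refine continuous_pi fun g => ((IsLocallyConstant.iff_eventually_eq _).2 fun x => ?_).continuous
  filter_upwards [(isOpen_prodiscrete_cylinder (D.image (g * ·)) x).mem_nhds fun _ _ => rfl]
    with y hy
  exact hσ y x g fun d hd => hy _ (Finset.mem_image_of_mem _ hd)

end Memory

section Nilpotence

variable {G A : Type*} [Group G]

lemma exists_cylinder_iterate_eq_zero [Countable G] [AddCommMonoid A] {V : AddSubmonoid (G → A)}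
    (hV : IsClosed[prodiscreteTop G A] (V : Set (G → A))) (f : (G → A) →+ (G → A))
    {D : Finset G} (hf : IsMemorySet D f) (hpn : ∀ x ∈ V, ∃ n, f^[n] x = 0) :
    ∃ n, ∃ Ω : Finset G, ∀ z ∈ V, (∀ ω ∈ Ω, z ω = 0) → f^[n] z = 0 := by
  classical
  have hclosed (n : ℕ) : IsClosed[prodiscreteTop G A] {x | f^[n] x = 0} := by
    let _ : TopologicalSpace A := ⊥
    have : DiscreteTopology A := ⟨rfl⟩
    exact (isClosed_singleton (X := G → A)).preimage (hf.iterate n).continuous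
  obtain ⟨n, x₀, hx₀, Ω, hΩ⟩ := exists_cylinder_subset_of_subset_iUnion hV ⟨0, V.zero_mem⟩
    hclosed fun x hx => Set.mem_iUnion.mpr (hpn x hx)
  refine ⟨n, Ω, fun z hz hzΩ => ?_⟩
  have hsum : f^[n] (x₀ + z) = 0 :=
    hΩ _ (V.add_mem hx₀ hz) fun ω hω => by simp [hzΩ ω hω]
  rwa [iterate_map_add, hΩ x₀ hx₀ fun _ _ => rfl, zero_add] at hsum

lemma eq_zero_of_topMixing [Infinite G] [Zero A] {S : Set (G → A)} (hmix : TopMixing S)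
    (h0 : 0 ∈ S) {σ : (G → A) → (G → A)} {D : Finset G} (hσ : IsMemorySet D σ)
    (hcomm : ∀ g : G, Function.Commute σ fun x h => x (g * h)) {Ω : Finset G}
    (hΩ : ∀ z ∈ S, (∀ ω ∈ Ω, z ω = 0) → σ z = 0) {y : G → A} (hy : y ∈ S) : σ y = 0 := by
  classical
  funext c
  obtain ⟨F, hF⟩ := hmix _ _ (isOpen_prodiscrete_cylinder Ω 0)
    (isOpen_prodiscrete_cylinder (D.image (c * ·)) y) ⟨0, fun _ _ => rfl, h0⟩
    ⟨y, fun _ _ => rfl, hy⟩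
  obtain ⟨g, hg⟩ := Infinite.exists_notMem_finset F
  obtain ⟨z, ⟨hzΩ, hzS⟩, hzy, -⟩ := hF g hg
  calc σ y c = σ (fun h => z (g * h)) c :=
        hσ _ _ c fun d hd => (hzy _ (Finset.mem_image_of_mem _ hd)).symm
    _ = σ z (g * c) := congrFun (hcomm g z) c
    _ = 0 := by rw [hΩ z hzS hzΩ]; rfl

end Nilpotence

theorem stmt18_general {G K A : Type*} [Group G] [Infinite G] [Field K] [AddCommGroup A]
    [Module K A] (hfg : Group.FG G)
    (S : Set (G → A)) (hlin : IsLinearSubshift K S) (hmix : TopMixing S)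
    (τ : (G → A) → (G → A)) (hτ : IsLCA K τ)
    (hpn : ∀ x ∈ S, ∃ N : ℕ, ∀ n ≥ N, τ^[n] x = 0) :
    ∃ n₀ : ℕ, 1 ≤ n₀ ∧ ∀ x ∈ S, τ^[n₀] x = 0 := by
  classical
  obtain ⟨⟨V, rfl⟩, -, hV⟩ := hlin
  obtain ⟨hτlin, M, μ, -, hrule⟩ := hτ
  have := hfg.countable
  have hmem : IsMemorySet M τ := isMemorySet_of_localRule hrule
  obtain ⟨n, Ω, hΩ⟩ := exists_cylinder_iterate_eq_zero hV (hτlin.mk' τ).toAddMonoidHom hmem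
    fun x hx => (hpn x hx).imp fun N hN => hN N le_rfl
  have hnil (y : G → A) (hy : y ∈ V) : τ^[n] y = 0 :=
    eq_zero_of_topMixing hmix V.zero_mem (hmem.iterate n)
      (fun g => (commute_shift_of_localRule hrule g).iterate_left n) hΩ hy
  refine ⟨n + 1, le_add_self, fun y hy => ?_⟩
  rw [Function.iterate_succ_apply', hnil y hy]
  exact (hτlin.mk' τ).map_zero

theorem stmt18 {G K A : Type*} [Group G] [Infinite G] [Field K] [AddCommGroup A]
    [Module K A] [FiniteDimensional K A] (hfg : Group.FG G)
    (S : Set (G → A)) (hlin : IsLinearSubshift K S) (hmix : TopMixing S)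
    (τ : (G → A) → (G → A)) (hτ : IsLCA K τ) (hmap : Set.MapsTo τ S S)
    (hpn : ∀ x ∈ S, ∃ N : ℕ, ∀ n ≥ N, τ^[n] x = 0) :
    ∃ n₀ : ℕ, 1 ≤ n₀ ∧ ∀ x ∈ S, τ^[n₀] x = 0 :=
  stmt18_general hfg S hlin hmix τ hτ hpn
end
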